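/- Under Assumption 2 with constant δ > 0, for all integers m > n ≥ 1, sup_{μ ∈ Δ(Ω)} |v_m(μ) − v_n(μ)| ≤ (log|Ω| / (n·δ)) · V̄; consequently the sequence (v_n)_{n∈ℕ} converges uniformly on Δ(Ω) to v_∞. -/

import Mathlib

open Filter Topology
open scoped Classical

noncomputable section

/-- Δ(Ω): beliefs, i.e. probability distributions on the finite state space Ω,
as a subspace of Ω → ℝ (its topology agrees with the total-variation one). -/
abbrev Belief (Ω : Type*) [Fintype Ω] :=
  {p : Ω → ℝ // (∀ ω, 0 ≤ p ω) ∧ ∑ ω, p ω = 1}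

variable {Ω : Type*} [Fintype Ω]

/-- An element of F₀: a finite-support experiment, i.e. a finitely supported probability
distribution over beliefs (keys are the distinct posteriors p_j, values the positive
weights λ_j). -/
structure SPExp (Ω : Type*) [Fintype Ω] where
  w : Belief Ω →₀ ℝ
  nonneg : ∀ p, 0 ≤ w p
  sum_one : ∑ p ∈ w.support, w p = 1

namespace SPExp

/-- τ(e): the support of an experiment. -/
def tau (e : SPExp Ω) : Finset (Belief Ω) := e.w.support

/-- Expectation of a real-valued function under an experiment. -/
def expect (e : SPExp Ω) (f : Belief Ω → ℝ) : ℝ := ∑ p ∈ e.w.support, e.w p * f p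

/-- σ(e): the barycenter (expectation) of an experiment. -/
def sigma (e : SPExp Ω) : Belief Ω :=
  ⟨fun ω => ∑ p ∈ e.w.support, e.w p * p.val ω,
   fun ω => Finset.sum_nonneg fun p _ => mul_nonneg (e.nonneg p) (p.2.1 ω),
   by
     calc ∑ ω, ∑ p ∈ e.w.support, e.w p * p.val ω
         = ∑ p ∈ e.w.support, ∑ ω, e.w p * p.val ω := Finset.sum_comm
       _ = ∑ p ∈ e.w.support, e.w p * ∑ ω, p.val ω := by
           refine Finset.sum_congr rfl fun p _ => ?_
           rw [Finset.mul_sum]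
       _ = ∑ p ∈ e.w.support, e.w p := by
           refine Finset.sum_congr rfl fun p _ => ?_
           rw [p.2.2, mul_one]
       _ = 1 := e.sum_one⟩

/-- The trivial experiment (1, p). -/
def triv (p : Belief Ω) : SPExp Ω where
  w := Finsupp.single p 1
  nonneg := fun q => by
    rw [Finsupp.single_apply]
    split <;> norm_num
  sum_one := by
    rw [Finsupp.support_single_ne_zero _ one_ne_zero]
    simp

end SPExp

/-- T: the set of trivial experiments. -/
def Trivials (Ω : Type*) [Fintype Ω] : Set (SPExp Ω) := Set.range SPExp.triv

/-- Weak convergence of experiments, viewed as Borel probability measures on Δ(Ω). -/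
def WeakTendsto (es : ℕ → SPExp Ω) (e : SPExp Ω) : Prop :=
  ∀ f : Belief Ω → ℝ, Continuous f →
    Tendsto (fun i => (es i).expect f) atTop (𝓝 (e.expect f))

/-- Convergence of beliefs in total variation. -/
def TVTendsto (ps : ℕ → Belief Ω) (p : Belief Ω) : Prop :=
  Tendsto (fun i => ∑ ω, |(ps i).val ω - p.val ω|) atTop (𝓝 0)

/-- Histories, most recent step first: entries are (experiment taken, realized posterior);
the starting belief is kept separately. -/
abbrev Hist (Ω : Type*) [Fintype Ω] := List (SPExp Ω × Belief Ω)

/-- last(ξ): the current belief after history ξ started at μ. -/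
def lastBelief (μ : Belief Ω) : Hist Ω → Belief Ω
  | [] => μ
  | (_, p) :: _ => p

/-- Pr[ξ]: the probability of a history. -/
def histProb : Hist Ω → ℝ
  | [] => 1
  | (e, p) :: ξ => e.w p * histProb ξ

/-- A sequential persuasion starting from μ with feasible experiments F, given by its
history-dependent choice of the next (feasible, Bayes-plausible) experiment.  An n-step
sequential persuasion is such a strategy used for n steps; an infinite sequential
persuasion is the strategy itself. -/
structure SeqP {Ω : Type*} [Fintype Ω] (F : Set (SPExp Ω)) (μ : Belief Ω) where
  next : Hist Ω → SPExp Ω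
  feasible : ∀ ξ, next ξ ∈ F
  bayes : ∀ ξ, (next ξ).sigma = lastBelief μ ξ

variable {F : Set (SPExp Ω)} {μ : Belief Ω}

/-- Expectation of g over the n-step histories of S extending ξ. -/
def histExp (S : SeqP F μ) (g : Hist Ω → ℝ) : ℕ → Hist Ω → ℝ
  | 0, ξ => g ξ
  | n + 1, ξ => (S.next ξ).expect fun p => histExp S g n ((S.next ξ, p) :: ξ)

/-- Ξ_n: the set of n-step histories of S. -/
def Hists (S : SeqP F μ) : ℕ → Set (Hist Ω)
  | 0 => {[]}
  | n + 1 => {ξ' | ∃ ξ ∈ Hists S n, ∃ p ∈ (S.next ξ).tau, ξ' = (S.next ξ, p) :: ξ}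

/-- ξ padded by l trivial steps. -/
def padHist (μ : Belief Ω) (ξ : Hist Ω) (l : ℕ) : Hist Ω :=
  List.replicate l (SPExp.triv (lastBelief μ ξ), lastBelief μ ξ) ++ ξ

/-- S terminates after ξ: all subsequent choices (along trivial continuations of ξ)
are the trivial experiment. -/
def TerminatesAfter (S : SeqP F μ) (ξ : Hist Ω) : Prop :=
  ∀ l : ℕ, S.next (padHist μ ξ l) = SPExp.triv (lastBelief μ ξ)

/-- 𝒱(S⁽ⁿ⁾) = E[v(b_n)], the expected utility of the n-step persuasion given by the
first n steps of S. -/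
def stepUtility (v : Belief Ω → ℝ) (S : SeqP F μ) (n : ℕ) : ℝ :=
  histExp S (fun ξ => v (lastBelief μ ξ)) n []

/-- Pr[S terminates after n steps]. -/
def termProb (S : SeqP F μ) (n : ℕ) : ℝ :=
  histExp S (fun ξ => if TerminatesAfter S ξ then 1 else 0) n []

/-- 𝒱(S) for an infinite sequential persuasion S. -/
def infUtility (v : Belief Ω → ℝ) (S : SeqP F μ) : ℝ :=
  ⨆ n : ℕ, histExp S (fun ξ => if TerminatesAfter S ξ then v (lastBelief μ ξ) else 0) n []

/-- Pr[b_n ∈ O] for the belief b_n induced by S after n steps. -/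
def massIn (S : SeqP F μ) (O : Set (Belief Ω)) (n : ℕ) : ℝ :=
  histExp S (fun ξ => if lastBelief μ ξ ∈ O then 1 else 0) n []

/-- v_n(p): the optimal value over n-step sequential persuasions starting from p. -/
def vN (F : Set (SPExp Ω)) (v : Belief Ω → ℝ) (n : ℕ) (p : Belief Ω) : ℝ :=
  ⨆ S : SeqP F p, stepUtility v S n

/-- v_∞(p): the optimal value over infinite sequential persuasions starting from p. -/
def vInf (F : Set (SPExp Ω)) (v : Belief Ω → ℝ) (p : Belief Ω) : ℝ :=
  ⨆ S : SeqP F p, infUtility v S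

/-- Assumption 1: a uniform support bound h, and weak closedness of F. -/
def Assumption1 (F : Set (SPExp Ω)) (h : ℕ) : Prop :=
  (∀ e ∈ F, e.tau.card ≤ h) ∧
  ∀ es : ℕ → SPExp Ω, (∀ i, es i ∈ F) → ∀ e : SPExp Ω, WeakTendsto es e → e ∈ F

/-- Shannon entropy of a belief. -/
def entropy (p : Belief Ω) : ℝ := -∑ ω, p.val ω * Real.log (p.val ω)

/-- Assumption 2: every nontrivial feasible experiment lowers expected entropy by δ. -/
def Assumption2 (F : Set (SPExp Ω)) (δ : ℝ) : Prop :=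
  ∀ e ∈ F \ Trivials Ω, e.expect entropy ≤ entropy e.sigma - δ

/-- S is (effectively) an n-step sequential persuasion: after n steps it only takes
trivial experiments. -/
def IsNStep (S : SeqP F μ) (n : ℕ) : Prop :=
  ∀ ξ : Hist Ω, n ≤ ξ.length → S.next ξ = SPExp.triv (lastBelief μ ξ)

/-- Assumption 3 at prior μ: a sequence of finite-step sequential persuasions whose
values tend to v_∞(μ) and which terminate at a uniform rate. -/
def Assumption3 (F : Set (SPExp Ω)) (v : Belief Ω → ℝ) (μ : Belief Ω) : Prop :=
  ∃ (nk : ℕ → ℕ) (Sk : ℕ → SeqP F μ),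
    (∀ k, IsNStep (Sk k) (nk k)) ∧
    Tendsto (fun k => stepUtility v (Sk k) (nk k)) atTop (𝓝 (vInf F v μ)) ∧
    ∀ ε : ℝ, 0 < ε → ∃ N : ℕ, ∀ k, N ≤ nk k → 1 - ε ≤ termProb (Sk k) N

/-- v̂: the concave closure of v (the value of unconstrained Bayesian persuasion). -/
def concaveClosure (v : Belief Ω → ℝ) (p : Belief Ω) : ℝ :=
  sSup {x : ℝ | ∃ e : SPExp Ω, e.sigma = p ∧ x = e.expect v}

/-- O is implementable for (μ, F). -/
def Implementable (F : Set (SPExp Ω)) (μ : Belief Ω) (O : Set (Belief Ω)) : Prop :=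
  ∀ ε : ℝ, 0 < ε → ∃ (n : ℕ) (S : SeqP F μ), 1 - ε < massIn S O n

/-- S is a Markov sequential persuasion compatible with (μ, D, Z, ρ). -/
def MarkovCompatible (S : SeqP F μ) (D Z : Set (Belief Ω)) (ρ : Belief Ω → SPExp Ω) : Prop :=
  ∀ ξ : Hist Ω,
    (lastBelief μ ξ ∈ D → S.next ξ = ρ (lastBelief μ ξ)) ∧
    (lastBelief μ ξ ∈ Z → S.next ξ = SPExp.triv (lastBelief μ ξ))

/-- The j-th child of vertex m at depth n of the infinite h-ary tree. -/
def treeChild {h n : ℕ} (m : Fin (h ^ n)) (j : Fin h) : Fin (h ^ (n + 1)) :=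
  ⟨m.val * h + j.val, by
    have h1 : m.val + 1 ≤ h ^ n := m.isLt
    have h2 : j.val < h := j.isLt
    calc m.val * h + j.val < m.val * h + h := by omega
      _ = (m.val + 1) * h := by ring
      _ ≤ h ^ n * h := Nat.mul_le_mul h1 le_rfl
      _ = h ^ (n + 1) := (pow_succ h n).symm⟩

/-- An h-branching sequential persuasion starting from μ. -/
structure HBranch (Ω : Type*) [Fintype Ω] (F : Set (SPExp Ω)) (h : ℕ) (μ : Belief Ω) where
  π : ∀ n : ℕ, Fin (h ^ n) → ℝ
  β : ∀ n : ℕ, Fin (h ^ n) → Belief Ω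
  η : ∀ n : ℕ, Fin (h ^ n) → SPExp Ω
  π_nonneg : ∀ n m, 0 ≤ π n m
  π_sum : ∀ n : ℕ, ∑ m, π n m = 1
  η_mem : ∀ n m, η n m ∈ F
  β_root : ∀ m, β 0 m = μ
  compat_sigma : ∀ n m, (η n m).sigma = β n m
  compat_tau : ∀ (n : ℕ) (m : Fin (h ^ n)), ∀ p ∈ (η n m).tau,
    ∃ j : Fin h, β (n + 1) (treeChild m j) = p
  consistent : ∀ (n : ℕ) (m : Fin (h ^ n)) (p : Belief Ω),
    (∑ j : Fin h, if β (n + 1) (treeChild m j) = p then π (n + 1) (treeChild m j) else 0)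
      = π n m * (η n m).w p

/-- c' (at depth n + l) is a descendant of c (at depth n) in the h-ary tree. -/
def Descendant {h : ℕ} : {n : ℕ} → (l : ℕ) → Fin (h ^ n) → Fin (h ^ (n + l)) → Prop
  | _, 0, c, c' => c = c'
  | _, l + 1, c, c' => ∃ c'' j, Descendant l c c'' ∧ c' = treeChild c'' j

namespace HBranch

variable {h : ℕ}

/-- B terminates after vertex m at depth n. -/
def TermAfter (B : HBranch Ω F h μ) (n : ℕ) (m : Fin (h ^ n)) : Prop :=
  B.η n m ∈ Trivials Ω ∧
  ∀ (l : ℕ) (c' : Fin (h ^ (n + l))), Descendant l m c' → 0 < B.π (n + l) c' →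
    B.η (n + l) c' ∈ Trivials Ω

/-- Pr[B terminates after n steps]. -/
def termProb (B : HBranch Ω F h μ) (n : ℕ) : ℝ :=
  ∑ m : Fin (h ^ n), if B.TermAfter n m then B.π n m else 0

end HBranch

/-- B represents the infinite sequential persuasion S (via maps r_n : C_n → Ξ_n). -/
def Represents (S : SeqP F μ) {h : ℕ} (B : HBranch Ω F h μ) : Prop :=
  ∃ r : ∀ n : ℕ, Fin (h ^ n) → Hist Ω,
    ∀ n : ℕ,
      (∀ c, r n c ∈ Hists S n) ∧
      (∀ ξ ∈ Hists S n, histProb ξ = ∑ c, if r n c = ξ then B.π n c else 0) ∧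
      (∀ c, lastBelief μ (r n c) = B.β n c ∧ S.next (r n c) = B.η n c) ∧
      (∀ l : ℕ, ∀ ξ ∈ Hists S n, ∀ ξ' ∈ Hists S (n + l),
        (ξ <:+ ξ' ↔
          ∀ c' : Fin (h ^ (n + l)), r (n + l) c' = ξ' →
            ∃ c : Fin (h ^ n), r n c = ξ ∧ Descendant l c c'))

/-- The number of nontrivial experiments taken along a history. -/
def nontrivCount (ξ : Hist Ω) : ℕ :=
  ξ.countP fun s => decide (s.1 ∉ Trivials Ω)

end

/-!
Under Assumption 2, `H(b) + δ k`, where `b` is the current belief and `k` the number of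
nontrivial experiments run so far, is a supermartingale along every feasible persuasion; by the
Bellman inequality `E_e[v_j] ≤ v_{j+1}(σ(e))`, so is `v_{n-k}(b)` (read as `0` once `k > n`).
Their combination `v_{n-k}(b) + V̄/(nδ) · (H(b) + δ k)` dominates `v(b)` (for `k > n` the
entropy term alone exceeds `V̄`, which is Markov's inequality in disguise) and starts at
`v_n(μ) + V̄/(nδ) · H(μ) ≤ v_n(μ) + V̄ log |Ω| / (nδ)`. This bounds `v_m` for every `m`, and
hence `v_∞`, by `v_n + V̄ log |Ω| / (nδ)`.
-/

open SPExp

lemma tendstoUniformly_of_eventually_dist_le {ι α β : Type*} [PseudoMetricSpace β]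
    {l : Filter ι} {F : ι → α → β} {f : α → β} {u : ι → ℝ} (hu : Tendsto u l (𝓝 0))
    (h : ∀ᶠ i in l, ∀ x, dist (f x) (F i x) ≤ u i) : TendstoUniformly F f l :=
  Metric.tendstoUniformly_iff.2 fun _ hε =>
    (h.and (hu.eventually (gt_mem_nhds hε))).mono fun _ hi x => (hi.1 x).trans_lt hi.2

section Persuasion

variable {Ω : Type*} [Fintype Ω] {F : Set (SPExp Ω)} {μ : Belief Ω}

namespace SPExp

lemma expect_triv (p : Belief Ω) (f : Belief Ω → ℝ) : (triv p).expect f = f p := by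
  simp [expect, triv]

lemma sigma_triv (p : Belief Ω) : (triv p).sigma = p := by
  ext ω
  simp [sigma, triv]

lemma expect_mono (e : SPExp Ω) {f g : Belief Ω → ℝ} (h : ∀ p, f p ≤ g p) :
    e.expect f ≤ e.expect g :=
  Finset.sum_le_sum fun p _ => mul_le_mul_of_nonneg_left (h p) (e.nonneg p)

lemma expect_const (e : SPExp Ω) (c : ℝ) : e.expect (fun _ => c) = c := by
  rw [expect, ← Finset.sum_mul, e.sum_one, one_mul]

lemma expect_add (e : SPExp Ω) (f g : Belief Ω → ℝ) :
    e.expect (fun p => f p + g p) = e.expect f + e.expect g := by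
  simp only [expect, mul_add, Finset.sum_add_distrib]

lemma expect_const_mul (e : SPExp Ω) (c : ℝ) (f : Belief Ω → ℝ) :
    e.expect (fun p => c * f p) = c * e.expect f := by
  simp only [expect, Finset.mul_sum, mul_left_comm]

lemma expect_le (e : SPExp Ω) {f : Belief Ω → ℝ} {C : ℝ} (h : ∀ p, f p ≤ C) :
    e.expect f ≤ C :=
  (expect_mono e h).trans_eq (expect_const e C)

end SPExp

lemma triv_mem_Trivials (p : Belief Ω) : triv p ∈ Trivials Ω := ⟨p, rfl⟩

lemma eq_triv_sigma_of_mem_Trivials {e : SPExp Ω} (he : e ∈ Trivials Ω) :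
    e = triv e.sigma := by
  obtain ⟨q, rfl⟩ := he
  rw [sigma_triv]

lemma SeqP.next_eq_triv (S : SeqP F μ) {ξ : Hist Ω} (h : S.next ξ ∈ Trivials Ω) :
    S.next ξ = triv (lastBelief μ ξ) := by
  rw [eq_triv_sigma_of_mem_Trivials h, S.bayes]

lemma nonempty_seqP (hTF : Trivials Ω ⊆ F) (p : Belief Ω) : Nonempty (SeqP F p) :=
  ⟨{ next := fun ξ => triv (lastBelief p ξ)
     feasible := fun _ => hTF (triv_mem_Trivials _)
     bayes := fun _ => sigma_triv _ }⟩

lemma nontrivCount_cons (e : SPExp Ω) (p : Belief Ω) (ξ : Hist Ω) :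
    nontrivCount ((e, p) :: ξ) = nontrivCount ξ + if e ∈ Trivials Ω then 0 else 1 := by
  by_cases h : e ∈ Trivials Ω <;> simp [nontrivCount, h]

lemma entropy_eq_sum_negMulLog (p : Belief Ω) : entropy p = ∑ ω, Real.negMulLog (p.val ω) := by
  simp [entropy, Real.negMulLog, Finset.sum_neg_distrib]

lemma entropy_nonneg (p : Belief Ω) : 0 ≤ entropy p := by
  have hp1 (ω : Ω) : p.val ω ≤ 1 :=
    (Finset.single_le_sum (fun ω' _ => p.2.1 ω') (Finset.mem_univ ω)).trans_eq p.2.2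
  rw [entropy_eq_sum_negMulLog]
  exact Finset.sum_nonneg fun ω _ => Real.negMulLog_nonneg (p.2.1 ω) (hp1 ω)

lemma entropy_le_log_card (p : Belief Ω) : entropy p ≤ Real.log (Fintype.card Ω) := by
  have hN : (0 : ℝ) < Fintype.card Ω := by
    have : (Finset.univ : Finset Ω).Nonempty :=
      Finset.nonempty_of_sum_ne_zero (p.2.2.symm ▸ one_ne_zero)
    exact_mod_cast Finset.card_pos.2 this
  have hJensen := Real.concaveOn_negMulLog.le_map_sum (t := Finset.univ)
    (w := fun _ => (Fintype.card Ω : ℝ)⁻¹) (p := p.val) (fun _ _ => by positivity)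
    (by simp [hN.ne']) (fun ω _ => Set.mem_Ici.2 (p.2.1 ω))
  simp only [smul_eq_mul, ← Finset.mul_sum, p.2.2, mul_one] at hJensen
  rw [Real.negMulLog, Real.log_inv, ← entropy_eq_sum_negMulLog] at hJensen
  have := mul_le_mul_of_nonneg_left hJensen hN.le
  field_simp at this
  linarith

lemma histExp_congr {F₁ F₂ : Set (SPExp Ω)} {μ₁ μ₂ : Belief Ω}
    (S₁ : SeqP F₁ μ₁) (S₂ : SeqP F₂ μ₂) {g₁ g₂ : Hist Ω → ℝ} (r : ℕ) (ξ : Hist Ω)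
    (hS : ∀ ξ' : Hist Ω, ξ'.length < ξ.length + r → S₁.next ξ' = S₂.next ξ')
    (hg : ∀ ξ' : Hist Ω, ξ'.length = ξ.length + r → g₁ ξ' = g₂ ξ') :
    histExp S₁ g₁ r ξ = histExp S₂ g₂ r ξ := by
  induction r generalizing ξ with
  | zero => exact hg ξ rfl
  | succ r ih =>
    simp only [histExp, hS ξ (by omega)]
    congr 1
    funext p
    exact ih _ (fun ξ' h => hS ξ' (by simp at h; omega))
      (fun ξ' h => hg ξ' (by simp at h; omega))

lemma histExp_mono (S : SeqP F μ) {g₁ g₂ : Hist Ω → ℝ} (h : ∀ ξ, g₁ ξ ≤ g₂ ξ) (r : ℕ)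
    (ξ : Hist Ω) : histExp S g₁ r ξ ≤ histExp S g₂ r ξ := by
  induction r generalizing ξ with
  | zero => exact h ξ
  | succ r ih => exact expect_mono _ fun _ => ih _

lemma histExp_le (S : SeqP F μ) {g : Hist Ω → ℝ} {C : ℝ} (h : ∀ ξ, g ξ ≤ C) (r : ℕ)
    (ξ : Hist Ω) : histExp S g r ξ ≤ C := by
  induction r generalizing ξ with
  | zero => exact h ξ
  | succ r ih => exact expect_le _ fun _ => ih _

section Strategies

variable (hTF : Trivials Ω ⊆ F)

noncomputable def padSeqP (S : SeqP F μ) (n : ℕ) : SeqP F μ where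
  next ξ := if ξ.length < n then S.next ξ else triv (lastBelief μ ξ)
  feasible ξ := by
    split_ifs
    exacts [S.feasible ξ, hTF (triv_mem_Trivials _)]
  bayes ξ := by
    split_ifs
    exacts [S.bayes ξ, sigma_triv _]

lemma terminatesAfter_padSeqP (S : SeqP F μ) {n : ℕ} {ξ : Hist Ω} (h : n ≤ ξ.length) :
    TerminatesAfter (padSeqP hTF S n) ξ := by
  intro l
  have hlen : ¬(padHist μ ξ l).length < n := by simp [padHist]; omega
  have hlast : lastBelief μ (padHist μ ξ l) = lastBelief μ ξ := by cases l <;> rfl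
  simp only [padSeqP, hlen, if_false, hlast]

lemma stepUtility_padSeqP (v : Belief Ω → ℝ) (S : SeqP F μ) (n : ℕ) :
    stepUtility v S n =
      histExp (padSeqP hTF S n)
        (fun ξ => if TerminatesAfter (padSeqP hTF S n) ξ then v (lastBelief μ ξ) else 0) n [] :=
  histExp_congr _ _ n [] (fun ξ h => (if_pos (by simpa using h)).symm)
    (fun ξ h => (if_pos (terminatesAfter_padSeqP hTF S (by simp at h; omega))).symm)

/-- Histories are stored most recent step first, so the step taken by `e` is the last entry. -/
noncomputable def glueSeqP {e : SPExp Ω} (he : e ∈ F) (T : ∀ q : Belief Ω, SeqP F q) :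
    SeqP F e.sigma where
  next ξ := match ξ.getLast? with
    | none => e
    | some s => (T s.2).next ξ.dropLast
  feasible ξ := by
    rcases List.eq_nil_or_concat ξ with rfl | ⟨ζ, x, rfl⟩
    · exact he
    · simpa using (T x.2).feasible ζ
  bayes ξ := by
    rcases List.eq_nil_or_concat ξ with rfl | ⟨ζ, x, rfl⟩
    · rfl
    · simp only [List.concat_eq_append, List.getLast?_concat, List.dropLast_concat,
        (T x.2).bayes ζ]
      rcases ζ with _ | ⟨⟨_, _⟩, _⟩ <;> rfl

end Strategies

section Values

variable {v : Belief Ω → ℝ} {Vhi : ℝ}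

lemma histExp_glueSeqP {e : SPExp Ω} (he : e ∈ F) (T : ∀ q : Belief Ω, SeqP F q)
    (f : Belief Ω → ℝ) (x : SPExp Ω × Belief Ω) (j : ℕ) (ζ : Hist Ω) :
    histExp (glueSeqP he T) (fun ξ => f (lastBelief e.sigma ξ)) j (ζ ++ [x]) =
      histExp (T x.2) (fun ξ => f (lastBelief x.2 ξ)) j ζ := by
  induction j generalizing ζ with
  | zero => rcases x with ⟨_, _⟩; rcases ζ with _ | ⟨⟨_, _⟩, _⟩ <;> rfl
  | succ j ih =>
    have hnext : (glueSeqP he T).next (ζ ++ [x]) = (T x.2).next ζ := by simp [glueSeqP]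
    simp only [histExp, hnext]
    exact congrArg _ (funext fun q => ih (_ :: ζ))

lemma stepUtility_glueSeqP {e : SPExp Ω} (he : e ∈ F) (T : ∀ q : Belief Ω, SeqP F q)
    (v : Belief Ω → ℝ) (k : ℕ) :
    stepUtility v (glueSeqP he T) (k + 1) = e.expect fun q => stepUtility v (T q) k :=
  congrArg e.expect (funext fun q => histExp_glueSeqP he T v (e, q) k [])

lemma stepUtility_le_vN (hvhi : ∀ p, v p ≤ Vhi) (S : SeqP F μ) (n : ℕ) :
    stepUtility v S n ≤ vN F v n μ :=
  le_ciSup (f := fun T : SeqP F μ => stepUtility v T n)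
    ⟨Vhi, Set.forall_mem_range.2 fun T => histExp_le T (fun _ => hvhi _) n []⟩ S

lemma expect_vN_le_vN_succ (hTF : Trivials Ω ⊆ F) (hvhi : ∀ p, v p ≤ Vhi) {e : SPExp Ω}
    (he : e ∈ F) (k : ℕ) : e.expect (vN F v k) ≤ vN F v (k + 1) e.sigma := by
  refine le_of_forall_pos_le_add fun ε hε => ?_
  have hclose (q : Belief Ω) : ∃ S : SeqP F q, vN F v k q - ε < stepUtility v S k :=
    haveI := nonempty_seqP hTF q
    exists_lt_of_lt_ciSup (f := fun S : SeqP F q => stepUtility v S k) (sub_lt_self _ hε)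
  choose T hT using hclose
  calc e.expect (vN F v k) ≤ e.expect fun q => stepUtility v (T q) k + ε :=
        expect_mono e fun q => by linarith [hT q]
    _ = stepUtility v (glueSeqP he T) (k + 1) + ε := by
        rw [expect_add, expect_const, stepUtility_glueSeqP]
    _ ≤ vN F v (k + 1) e.sigma + ε := by grw [stepUtility_le_vN hvhi]

lemma vN_zero (hTF : Trivials Ω ⊆ F) (v : Belief Ω → ℝ) (p : Belief Ω) : vN F v 0 p = v p :=
  haveI := nonempty_seqP hTF p
  ciSup_const

lemma vN_monotone (hTF : Trivials Ω ⊆ F) (hvhi : ∀ p, v p ≤ Vhi) (p : Belief Ω) :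
    Monotone fun k => vN F v k p :=
  monotone_nat_of_le_succ fun k => by
    simpa only [expect_triv, sigma_triv] using
      expect_vN_le_vN_succ hTF hvhi (hTF (triv_mem_Trivials p)) k

lemma le_vN (hTF : Trivials Ω ⊆ F) (hvhi : ∀ p, v p ≤ Vhi) (k : ℕ) (p : Belief Ω) :
    v p ≤ vN F v k p :=
  (vN_zero hTF v p).symm.trans_le (vN_monotone hTF hvhi p (Nat.zero_le k))

end Values

section Potentials

/-- `w p k` is a potential of the state (current belief `p`, number `k` of nontrivial
experiments so far), which trivial experiments leave unchanged. -/
def IsSuperharmonic (F : Set (SPExp Ω)) (w : Belief Ω → ℕ → ℝ) : Prop :=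
  ∀ e ∈ F \ Trivials Ω, ∀ k, e.expect (fun q => w q (k + 1)) ≤ w e.sigma k

variable {w w' : Belief Ω → ℕ → ℝ}

lemma IsSuperharmonic.add (hw : IsSuperharmonic F w) (hw' : IsSuperharmonic F w') :
    IsSuperharmonic F fun p k => w p k + w' p k := fun e he k => by
  rw [expect_add]
  exact add_le_add (hw e he k) (hw' e he k)

lemma IsSuperharmonic.const_mul (hw : IsSuperharmonic F w) {c : ℝ} (hc : 0 ≤ c) :
    IsSuperharmonic F fun p k => c * w p k := fun e he k => by
  rw [expect_const_mul]
  exact mul_le_mul_of_nonneg_left (hw e he k) hc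

lemma IsSuperharmonic.histExp_le (hw : IsSuperharmonic F w) (S : SeqP F μ) (r : ℕ)
    (ξ : Hist Ω) :
    histExp S (fun ξ' => w (lastBelief μ ξ') (nontrivCount ξ')) r ξ ≤
      w (lastBelief μ ξ) (nontrivCount ξ) := by
  induction r generalizing ξ with
  | zero => exact le_rfl
  | succ r ih =>
    refine (expect_mono _ fun q => ih _).trans ?_
    by_cases htr : S.next ξ ∈ Trivials Ω
    · rw [S.next_eq_triv htr, expect_triv, nontrivCount_cons, if_pos (triv_mem_Trivials _),
        add_zero]
      rfl
    · simpa only [lastBelief, nontrivCount_cons, if_neg htr, S.bayes] using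
        hw _ ⟨S.feasible ξ, htr⟩ (nontrivCount ξ)

lemma isSuperharmonic_entropy_add {δ : ℝ} (hA2 : Assumption2 F δ) :
    IsSuperharmonic F fun p k => entropy p + δ * k := fun e he k => by
  rw [expect_add, expect_const]
  push_cast
  linarith [hA2 e he]

variable {v : Belief Ω → ℝ} {Vhi : ℝ}

noncomputable def remainingValue (F : Set (SPExp Ω)) (v : Belief Ω → ℝ) (n : ℕ)
    (p : Belief Ω) (k : ℕ) : ℝ :=
  if k ≤ n then vN F v (n - k) p else 0

lemma remainingValue_nonneg (hTF : Trivials Ω ⊆ F) (hv0 : ∀ p, 0 ≤ v p)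
    (hvhi : ∀ p, v p ≤ Vhi) (n : ℕ) (p : Belief Ω) (k : ℕ) : 0 ≤ remainingValue F v n p k := by
  unfold remainingValue
  split_ifs
  exacts [(hv0 p).trans (le_vN hTF hvhi _ p), le_rfl]

lemma isSuperharmonic_remainingValue (hTF : Trivials Ω ⊆ F) (hv0 : ∀ p, 0 ≤ v p)
    (hvhi : ∀ p, v p ≤ Vhi) (n : ℕ) : IsSuperharmonic F (remainingValue F v n) := by
  intro e he k
  by_cases hk : k + 1 ≤ n
  · have hbellman := expect_vN_le_vN_succ hTF hvhi he.1 (n - (k + 1))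
    rw [show n - (k + 1) + 1 = n - k by omega] at hbellman
    simpa only [remainingValue, if_pos hk, if_pos (show k ≤ n by omega)] using hbellman
  · simp only [remainingValue, if_neg hk, expect_const]
    exact remainingValue_nonneg hTF hv0 hvhi n _ k

lemma le_remainingValue_add_entropy (hTF : Trivials Ω ⊆ F) (hv0 : ∀ p, 0 ≤ v p)
    (hvhi : ∀ p, v p ≤ Vhi) {δ : ℝ} (hδ : 0 < δ) {n : ℕ} (hn : 1 ≤ n) (p : Belief Ω) (k : ℕ) :
    v p ≤ remainingValue F v n p k + Vhi / (n * δ) * (entropy p + δ * k) := by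
  have hVhi : 0 ≤ Vhi := (hv0 p).trans (hvhi p)
  have hnδ : (0 : ℝ) < n * δ := mul_pos (by exact_mod_cast hn) hδ
  have hH := entropy_nonneg p
  by_cases hk : k ≤ n
  · have hpot : 0 ≤ Vhi / (n * δ) * (entropy p + δ * k) := by positivity
    rw [remainingValue, if_pos hk]
    linarith [le_vN hTF hvhi (n - k) p]
  · rw [remainingValue, if_neg hk, zero_add]
    have hnk : (n : ℝ) * δ ≤ δ * k := by
      rw [mul_comm]
      exact mul_le_mul_of_nonneg_left (by exact_mod_cast (not_le.1 hk).le) hδ.le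
    calc v p ≤ Vhi := hvhi p
      _ ≤ Vhi / (n * δ) * (δ * k) := by
        rw [div_mul_eq_mul_div, le_div_iff₀ hnδ]
        exact mul_le_mul_of_nonneg_left hnk hVhi
      _ ≤ Vhi / (n * δ) * (entropy p + δ * k) := by
        gcongr
        linarith

lemma vN_le_vN_add (hTF : Trivials Ω ⊆ F) (hv0 : ∀ p, 0 ≤ v p) (hvhi : ∀ p, v p ≤ Vhi)
    {δ : ℝ} (hδ : 0 < δ) (hA2 : Assumption2 F δ) {n : ℕ} (hn : 1 ≤ n) (m : ℕ)
    (μ : Belief Ω) :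
    vN F v m μ ≤ vN F v n μ + Real.log (Fintype.card Ω) / (n * δ) * Vhi := by
  have := nonempty_seqP hTF μ
  have hc : 0 ≤ Vhi / (n * δ) := div_nonneg ((hv0 μ).trans (hvhi μ)) (by positivity)
  have hw := (isSuperharmonic_remainingValue hTF hv0 hvhi n).add
    ((isSuperharmonic_entropy_add hA2).const_mul hc)
  refine ciSup_le fun S => ?_
  calc stepUtility v S m
      ≤ histExp S (fun ξ => remainingValue F v n (lastBelief μ ξ) (nontrivCount ξ) +
          Vhi / (n * δ) * (entropy (lastBelief μ ξ) + δ * nontrivCount ξ)) m [] :=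
        histExp_mono S (fun ξ => le_remainingValue_add_entropy hTF hv0 hvhi hδ hn _ _) m []
    _ ≤ remainingValue F v n μ 0 + Vhi / (n * δ) * (entropy μ + δ * (0 : ℕ)) :=
        hw.histExp_le S m []
    _ ≤ vN F v n μ + Vhi / (n * δ) * Real.log (Fintype.card Ω) := by
        simp only [remainingValue, if_pos (Nat.zero_le n), Nat.sub_zero, Nat.cast_zero,
          mul_zero, add_zero]
        grw [entropy_le_log_card μ]
    _ = vN F v n μ + Real.log (Fintype.card Ω) / (n * δ) * Vhi := by ring

end Potentials

section Infinite

variable {v : Belief Ω → ℝ} {Vhi : ℝ}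

lemma histExp_terminated_le (hv0 : ∀ p, 0 ≤ v p) (hvhi : ∀ p, v p ≤ Vhi) (S : SeqP F μ)
    (n : ℕ) :
    histExp S (fun ξ => if TerminatesAfter S ξ then v (lastBelief μ ξ) else 0) n [] ≤ Vhi :=
  histExp_le S (fun _ => by split_ifs; exacts [hvhi _, (hv0 μ).trans (hvhi μ)]) n []

lemma vN_le_vInf (hTF : Trivials Ω ⊆ F) (hv0 : ∀ p, 0 ≤ v p) (hvhi : ∀ p, v p ≤ Vhi)
    (n : ℕ) (μ : Belief Ω) : vN F v n μ ≤ vInf F v μ := by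
  have := nonempty_seqP hTF μ
  refine ciSup_le fun S => ?_
  rw [stepUtility_padSeqP hTF v S n]
  refine (le_ciSup ⟨Vhi, Set.forall_mem_range.2 (histExp_terminated_le hv0 hvhi _)⟩ n).trans ?_
  exact le_ciSup (f := fun T : SeqP F μ => infUtility v T)
    ⟨Vhi, Set.forall_mem_range.2 fun T => ciSup_le (histExp_terminated_le hv0 hvhi T)⟩ _

lemma vInf_le_of_forall_vN_le (hTF : Trivials Ω ⊆ F) (hv0 : ∀ p, 0 ≤ v p)
    (hvhi : ∀ p, v p ≤ Vhi) {C : ℝ} (h : ∀ m, vN F v m μ ≤ C) : vInf F v μ ≤ C := by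
  have := nonempty_seqP hTF μ
  refine ciSup_le fun S => ciSup_le fun m => ?_
  refine (histExp_mono S (fun ξ => ?_) m []).trans ((stepUtility_le_vN hvhi S m).trans (h m))
  split_ifs
  exacts [le_rfl, hv0 _]

end Infinite

end Persuasion

theorem vN_uniform_convergence_general {Ω : Type*} [Fintype Ω]
    (F : Set (SPExp Ω)) (hTF : Trivials Ω ⊆ F)
    (v : Belief Ω → ℝ) (Vlo Vhi : ℝ) (hVlo : 0 < Vlo)
    (hvlo : ∀ p, Vlo ≤ v p) (hvhi : ∀ p, v p ≤ Vhi)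
    (δ : ℝ) (hδ : 0 < δ) (hA2 : Assumption2 F δ) :
    (∀ m n : ℕ, 1 ≤ n → n < m → ∀ μ : Belief Ω,
      |vN F v m μ - vN F v n μ| ≤ Real.log (Fintype.card Ω) / (n * δ) * Vhi) ∧
    TendstoUniformly (fun n p => vN F v n p) (vInf F v) Filter.atTop := by
  have hv0 (p : Belief Ω) : 0 ≤ v p := hVlo.le.trans (hvlo p)
  have htail {n : ℕ} (hn : 1 ≤ n) (m : ℕ) (μ : Belief Ω) :=
    vN_le_vN_add hTF hv0 hvhi hδ hA2 hn m μ
  refine ⟨fun m n hn hnm μ => ?_, ?_⟩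
  · rw [abs_of_nonneg (sub_nonneg.2 (vN_monotone hTF hvhi μ hnm.le))]
    linarith [htail hn m μ]
  · refine tendstoUniformly_of_eventually_dist_le
      (u := fun n : ℕ => Real.log (Fintype.card Ω) / (n * δ) * Vhi) ?_ ?_
    · refine (tendsto_const_div_atTop_nhds_zero_nat
        (Real.log (Fintype.card Ω) * Vhi / δ)).congr fun n => ?_
      ring
    · filter_upwards [eventually_ge_atTop 1] with n hn μ
      rw [Real.dist_eq, abs_of_nonneg (sub_nonneg.2 (vN_le_vInf hTF hv0 hvhi n μ)),
        sub_le_iff_le_add']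
      exact vInf_le_of_forall_vN_le hTF hv0 hvhi fun m => htail hn m μ

/-- Under Assumption 2, the tail bound sup_μ |v_m(μ) − v_n(μ)| ≤ (log|Ω|/(nδ))·V̄ for
m > n ≥ 1, and hence (v_n) converges uniformly to v_∞. -/
theorem vN_uniform_convergence {Ω : Type*} [Fintype Ω] [Nonempty Ω]
    (F : Set (SPExp Ω)) (hTF : Trivials Ω ⊆ F)
    (v : Belief Ω → ℝ) (Vlo Vhi : ℝ) (hVlo : 0 < Vlo) (hVV : Vlo ≤ Vhi)
    (hvlo : ∀ p, Vlo ≤ v p) (hvhi : ∀ p, v p ≤ Vhi)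
    (husc : UpperSemicontinuous v)
    (δ : ℝ) (hδ : 0 < δ) (hA2 : Assumption2 F δ) :
    (∀ m n : ℕ, 1 ≤ n → n < m → ∀ μ : Belief Ω,
      |vN F v m μ - vN F v n μ| ≤ Real.log (Fintype.card Ω) / (n * δ) * Vhi) ∧
    TendstoUniformly (fun n p => vN F v n p) (vInf F v) Filter.atTop :=
  vN_uniform_convergence_general F hTF v Vlo Vhi hVlo hvlo hvhi δ hδ hA2
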